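/- arXiv:2012.14354 — 3 statements merged into one kernel-verified Lean document; each statement's English description precedes it below -/
import Mathlib

section
/- Let X be a compact metric space, f : X → X continuous, and x ∈ X. If the ω-limit set ω_f(x) is finite, then there exists a periodic point y of f such that (x,y) is an asymptotic pair, i.e., d(fⁿ(x), fⁿ(y)) → 0 as n → ∞. -/
open Filter

/-- The ω-limit set of `x` under `f`. -/
def omegaSet {X : Type*} [TopologicalSpace X] (f : X → X) (x : X) : Set X :=
  {y | ∃ φ : ℕ → ℕ, StrictMono φ ∧ Tendsto (fun i => f^[φ i] x) atTop (nhds y)}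

section Aux
set_option linter.unusedSectionVars false

variable {X : Type*} [MetricSpace X] [CompactSpace X]

lemma omega_nonempty (f : X → X) (x : X) : (omegaSet f x).Nonempty := by
  obtain ⟨z, -, φ, hφ, hconv⟩ := isCompact_univ.tendsto_subseq
    (x := fun n => f^[n] x) (fun n => Set.mem_univ _)
  exact ⟨z, φ, hφ, hconv⟩

lemma omega_inv {f : X → X} (hf : Continuous f) {x y : X} (hy : y ∈ omegaSet f x) :
    f y ∈ omegaSet f x := by
  obtain ⟨φ, hφ, hconv⟩ := hy
  refine ⟨fun i => φ i + 1, fun a b h => by simpa using hφ h, ?_⟩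
  have := (hf.tendsto y).comp hconv
  simpa [Function.comp_def, Function.iterate_succ_apply'] using this

lemma infDist_omega_tendsto (f : X → X) (x : X) :
    Tendsto (fun n => Metric.infDist (f^[n] x) (omegaSet f x)) atTop (nhds 0) := by
  by_contra h
  rw [Metric.tendsto_atTop] at h
  push_neg at h
  obtain ⟨ε, εpos, hε⟩ := h
  have hfreq : ∃ᶠ n in atTop,
      ε ≤ dist (Metric.infDist (f^[n] x) (omegaSet f x)) 0 := by
    rw [frequently_atTop]
    intro N
    obtain ⟨n, hn, hn2⟩ := hε N
    exact ⟨n, hn, hn2⟩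
  obtain ⟨φ, hφ, hφ2⟩ := Filter.extraction_of_frequently_atTop hfreq
  obtain ⟨z, -, ψ, hψ, hconv⟩ := isCompact_univ.tendsto_subseq
    (x := fun n => f^[φ n] x) (fun n => Set.mem_univ _)
  have hz : z ∈ omegaSet f x := ⟨φ ∘ ψ, hφ.comp hψ, hconv⟩
  have h0 : Metric.infDist z (omegaSet f x) = 0 := Metric.infDist_zero_of_mem hz
  have htend : Tendsto (fun n => Metric.infDist (f^[φ (ψ n)] x) (omegaSet f x))
      atTop (nhds 0) := by
    have := ((Metric.continuous_infDist_pt (omegaSet f x)).tendsto z).comp hconv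
    rwa [h0] at this
  have hle : ε ≤ 0 := by
    refine ge_of_tendsto htend (Eventually.of_forall fun n => ?_)
    have := hφ2 (ψ n)
    rwa [Real.dist_0_eq_abs, abs_of_nonneg Metric.infDist_nonneg] at this
  linarith

lemma finite_separated {s : Set X} (hs : s.Finite) :
    ∃ δ > (0:ℝ), ∀ a ∈ s, ∀ b ∈ s, dist a b < δ → a = b := by
  classical
  set t := hs.toFinset with ht
  by_cases h : t.offDiag.Nonempty
  · refine ⟨t.offDiag.inf' h (fun p => dist p.1 p.2), ?_, ?_⟩
    · rw [gt_iff_lt, Finset.lt_inf'_iff]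
      intro p hp
      rw [Finset.mem_offDiag] at hp
      exact dist_pos.2 hp.2.2
    · intro a ha b hb hab
      by_contra hne
      have hmem : (a, b) ∈ t.offDiag :=
        Finset.mem_offDiag.2 ⟨hs.mem_toFinset.2 ha, hs.mem_toFinset.2 hb, hne⟩
      have := Finset.inf'_le (fun p : X × X => dist p.1 p.2) hmem
      linarith
  · refine ⟨1, one_pos, fun a ha b hb _ => ?_⟩
    by_contra hne
    exact h ⟨(a, b), Finset.mem_offDiag.2
      ⟨hs.mem_toFinset.2 ha, hs.mem_toFinset.2 hb, hne⟩⟩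

lemma iterate_mod_period {f : X → X} {z : X} {m : ℕ} (hz : f^[m] z = z) (a : ℕ) :
    f^[a] z = f^[a % m] z := by
  conv_lhs => rw [← Nat.div_add_mod a m, Nat.add_comm]
  rw [Function.iterate_add_apply]
  congr 1
  induction a / m with
  | zero => simp
  | succ q ih => rw [Nat.mul_succ, Function.iterate_add_apply, hz, ih]

end Aux

theorem stmt2 {X : Type*} [MetricSpace X] [CompactSpace X]
    (f : X → X) (hf : Continuous f) (x : X)
    (hfin : (omegaSet f x).Finite) :
    ∃ (y : X) (m : ℕ), 0 < m ∧ f^[m] y = y ∧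
      Tendsto (fun n : ℕ => dist (f^[n] x) (f^[n] y)) atTop (nhds 0) := by
  classical
  set ω := omegaSet f x with hω
  have hne : ω.Nonempty := omega_nonempty f x
  have hinv : ∀ y ∈ ω, f y ∈ ω := fun y hy => omega_inv hf hy
  have hcomp : IsCompact ω := hfin.isCompact
  -- nearest point selection
  have hsel : ∀ n : ℕ, ∃ y ∈ ω, Metric.infDist (f^[n] x) ω = dist (f^[n] x) y :=
    fun n => hcomp.exists_infDist_eq_dist hne _
  choose g hgmem hgdist using hsel
  have hd0 : Tendsto (fun n => dist (f^[n] x) (g n)) atTop (nhds 0) := by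
    have := infDist_omega_tendsto f x
    refine this.congr fun n => ?_
    exact hgdist n
  obtain ⟨δ, δpos, hδ⟩ := finite_separated hfin
  have hu : UniformContinuous f := CompactSpace.uniformContinuous_of_continuous hf
  obtain ⟨η, ηpos, hη⟩ := Metric.uniformContinuous_iff.1 hu (δ / 2) (by positivity)
  obtain ⟨N, hN⟩ := (Metric.tendsto_atTop.1 hd0) (min η (δ / 2))
    (lt_min ηpos (by positivity))
  have hNlt : ∀ n ≥ N, dist (f^[n] x) (g n) < min η (δ / 2) := by
    intro n hn
    have := hN n hn
    rwa [Real.dist_0_eq_abs, abs_of_nonneg dist_nonneg] at this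
  have hstep : ∀ n ≥ N, g (n + 1) = f (g n) := by
    intro n hn
    have h1 : dist (f^[n] x) (g n) < η := (hNlt n hn).trans_le (min_le_left _ _)
    have h2 : dist (f^[n + 1] x) (f (g n)) < δ / 2 := by
      rw [Function.iterate_succ_apply']
      exact hη h1
    have h3 : dist (f^[n + 1] x) (g (n + 1)) ≤ dist (f^[n + 1] x) (f (g n)) := by
      rw [← hgdist]
      exact Metric.infDist_le_dist_of_mem (hinv _ (hgmem n))
    have h4 : dist (g (n + 1)) (f (g n)) < δ := by
      have := dist_triangle_left (g (n + 1)) (f (g n)) (f^[n + 1] x)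
      linarith
    exact hδ _ (hgmem _) _ (hinv _ (hgmem n)) h4
  have hiter : ∀ k, g (N + k) = f^[k] (g N) := by
    intro k
    induction k with
    | zero => simp
    | succ k ih =>
      have h1 : N + (k + 1) = (N + k) + 1 := by omega
      rw [h1, hstep (N + k) (by omega), Function.iterate_succ_apply', ih]
  have horb : ∀ k, f^[k] (g N) ∈ ω := by
    intro k
    induction k with
    | zero => exact hgmem N
    | succ k ih => rw [Function.iterate_succ_apply']; exact hinv _ ih
  -- pigeonhole: the orbit of g N in the finite set ω must repeat
  have hrep : ∃ i j : ℕ, i < j ∧ f^[i] (g N) = f^[j] (g N) := by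
    have : ¬ Function.Injective (fun k : ℕ => f^[k] (g N)) := by
      intro hinj
      exact (Set.infinite_of_injective_forall_mem hinj horb) hfin
    rw [Function.not_injective_iff] at this
    obtain ⟨i, j, heq', hne⟩ := this
    rcases hne.lt_or_gt with h | h
    · exact ⟨i, j, h, heq'⟩
    · exact ⟨j, i, h, heq'.symm⟩
  obtain ⟨i, j, hij, hperiod⟩ := hrep
  set z := f^[i] (g N) with hz
  set m := j - i with hm
  have hmpos : 0 < m := by omega
  have hzm : f^[m] z = z := by
    rw [hz, ← Function.iterate_add_apply, hm]
    have : j - i + i = j := by omega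
    rw [this, ← hperiod]
  set M := N + i with hM
  have hgM : ∀ n ≥ M, g n = f^[n - M] z := by
    intro n hn
    have h1 : n = N + (n - N) := by omega
    rw [h1, hiter (n - N), hz, ← Function.iterate_add_apply]
    congr 1
    omega
  -- choose y = f^[t] z with m ∣ t + M
  set t := (m - M % m) % m with htdef
  have htM : (t + M) % m = 0 := by
    rcases Nat.eq_zero_or_pos (M % m) with h0 | hpos
    · have : t = 0 := by
        rw [htdef, h0, Nat.sub_zero, Nat.mod_self]
      rw [this, Nat.zero_add, h0]
    · have hlt : M % m < m := Nat.mod_lt _ hmpos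
      have ht' : t = m - M % m := by
        rw [htdef]
        exact Nat.mod_eq_of_lt (by omega)
      rw [Nat.add_mod, ht', Nat.mod_eq_of_lt (a := m - M % m) (by omega)]
      have : m - M % m + M % m = m := by omega
      rw [this, Nat.mod_self]
  refine ⟨f^[t] z, m, hmpos, ?_, ?_⟩
  · rw [← Function.iterate_add_apply, Nat.add_comm, Function.iterate_add_apply, hzm]
  · refine hd0.congr' ?_
    rw [EventuallyEq, eventually_atTop]
    refine ⟨M, fun n hn => ?_⟩
    have hy : f^[n] (f^[t] z) = f^[n - M] z := by
      rw [← Function.iterate_add_apply]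
      rw [iterate_mod_period hzm (n + t), iterate_mod_period hzm (n - M)]
      congr 1
      have h1 : n + t = (n - M) + (t + M) := by omega
      rw [h1, Nat.add_mod, htM, Nat.add_zero, Nat.mod_mod_of_dvd _ dvd_rfl]
    rw [hgM n hn, hy]
end

section
/- Let X be a compact metric space, f : X → X continuous with a periodic point y of period p, and suppose x ∈ X satisfies d(fⁿ(x), fⁿ(y)) → 0. Then for every continuous φ : X → ℂ, assuming that (1/N)∑_{n=1}^N μ(n) z_n → 0 for every eventually periodic sequence (z_n), one has (1/N) ∑_{n=1}^N μ(n) φ(fⁿ(x)) → 0. -/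
open Filter Finset

theorem stmt3 {X : Type*} [MetricSpace X] [CompactSpace X]
    (f : X → X) (hf : Continuous f) (x y : X) (p : ℕ) (hp : 0 < p)
    (hper : f^[p] y = y)
    (hasym : Tendsto (fun n : ℕ => dist (f^[n] x) (f^[n] y)) atTop (nhds 0))
    (φ : X → ℂ) (hφ : Continuous φ)
    (hEP : ∀ z : ℕ → ℂ, (∃ n₀ q : ℕ, 1 ≤ q ∧ ∀ n ≥ n₀, z (n + q) = z n) →
      Tendsto (fun N : ℕ => (1 / (N : ℂ)) * ∑ n ∈ Finset.Icc 1 N,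
        ((ArithmeticFunction.moebius n : ℤ) : ℂ) * z n) atTop (nhds 0)) :
    Tendsto (fun N : ℕ => (1 / (N : ℂ)) * ∑ n ∈ Finset.Icc 1 N,
      ((ArithmeticFunction.moebius n : ℤ) : ℂ) * φ (f^[n] x)) atTop (nhds 0) := by
  set g : ℕ → ℂ := fun n => φ (f^[n] x) - φ (f^[n] y) with hg
  -- the periodic part
  have T1 : Tendsto (fun N : ℕ => (1 / (N : ℂ)) * ∑ n ∈ Finset.Icc 1 N,
      ((ArithmeticFunction.moebius n : ℤ) : ℂ) * φ (f^[n] y)) atTop (nhds 0) := by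
    apply hEP
    refine ⟨0, p, hp, fun n _ => ?_⟩
    rw [Function.iterate_add_apply, hper]
  -- φ is uniformly continuous
  have hu : UniformContinuous φ := CompactSpace.uniformContinuous_of_continuous hφ
  have hgt : Tendsto (fun n : ℕ => ‖g n‖) atTop (nhds 0) := by
    rw [Metric.tendsto_atTop]
    intro ε hε
    obtain ⟨δ, hδ, hδε⟩ := Metric.uniformContinuous_iff.mp hu ε hε
    obtain ⟨N, hN⟩ := Metric.tendsto_atTop.mp hasym δ hδ
    refine ⟨N, fun n hn => ?_⟩
    have h1 := hN n hn
    rw [Real.dist_eq, sub_zero, abs_of_nonneg dist_nonneg] at h1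
    have h2 := hδε h1
    rw [Real.dist_eq, sub_zero, abs_of_nonneg (norm_nonneg _)]
    simpa [hg, dist_eq_norm] using h2
  -- moebius is bounded by 1
  have hmb : ∀ n : ℕ, ‖((ArithmeticFunction.moebius n : ℤ) : ℂ)‖ ≤ 1 := by
    intro n
    by_cases h : Squarefree n
    · rw [ArithmeticFunction.moebius_apply_of_squarefree h]
      simp
    · rw [ArithmeticFunction.moebius_eq_zero_of_not_squarefree h]
      simp
  -- Cesàro for the error term
  have hshift : Tendsto (fun i : ℕ => ‖g (1 + i)‖) atTop (nhds 0) := by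
    simp only [add_comm 1]
    exact hgt.comp (tendsto_add_atTop_nat 1)
  have hces := hshift.cesaro
  have T2 : Tendsto (fun N : ℕ => (1 / (N : ℂ)) * ∑ n ∈ Finset.Icc 1 N,
      ((ArithmeticFunction.moebius n : ℤ) : ℂ) * g n) atTop (nhds 0) := by
    apply squeeze_zero_norm (a := fun N : ℕ => (N : ℝ)⁻¹ * ∑ i ∈ range N, ‖g (1 + i)‖) _ hces
    intro N
    rw [norm_mul]
    have h1 : ‖(1 / (N : ℂ))‖ = (N : ℝ)⁻¹ := by
      simp [norm_div]
    rw [h1]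
    have h2 : ‖∑ n ∈ Finset.Icc 1 N, ((ArithmeticFunction.moebius n : ℤ) : ℂ) * g n‖
        ≤ ∑ i ∈ range N, ‖g (1 + i)‖ := by
      calc ‖∑ n ∈ Finset.Icc 1 N, ((ArithmeticFunction.moebius n : ℤ) : ℂ) * g n‖
          ≤ ∑ n ∈ Finset.Icc 1 N, ‖((ArithmeticFunction.moebius n : ℤ) : ℂ) * g n‖ :=
            norm_sum_le _ _
        _ ≤ ∑ n ∈ Finset.Icc 1 N, ‖g n‖ := by
            refine Finset.sum_le_sum fun n _ => ?_
            rw [norm_mul]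
            calc ‖((ArithmeticFunction.moebius n : ℤ) : ℂ)‖ * ‖g n‖
                ≤ 1 * ‖g n‖ := by
                  exact mul_le_mul_of_nonneg_right (hmb n) (norm_nonneg _)
              _ = ‖g n‖ := one_mul _
        _ = ∑ i ∈ range N, ‖g (1 + i)‖ := by
            rw [← Finset.Ico_add_one_right_eq_Icc, Finset.sum_Ico_eq_sum_range]
            simp
    exact mul_le_mul_of_nonneg_left h2 (by positivity)
  have key : (fun N : ℕ => (1 / (N : ℂ)) * ∑ n ∈ Finset.Icc 1 N,
      ((ArithmeticFunction.moebius n : ℤ) : ℂ) * φ (f^[n] x))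
      = fun N : ℕ => ((1 / (N : ℂ)) * ∑ n ∈ Finset.Icc 1 N,
        ((ArithmeticFunction.moebius n : ℤ) : ℂ) * g n)
      + ((1 / (N : ℂ)) * ∑ n ∈ Finset.Icc 1 N,
        ((ArithmeticFunction.moebius n : ℤ) : ℂ) * φ (f^[n] y)) := by
    funext N
    rw [← mul_add, ← Finset.sum_add_distrib]
    congr 1
    refine Finset.sum_congr rfl fun n _ => ?_
    simp only [hg]
    ring
  rw [key]
  simpa using T2.add T1
end

section
/- Let X be a dendrite. The set B(X) of branch points of X (points x such that X \ {x} has at least three connected components) is countable. -/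
open Filter

open Set in
/-- The triple property: `a b c` are dense-set points in three distinct
connected components of `{x}ᶜ`. -/
private def TripleProp {X : Type*} [TopologicalSpace X] (D : Set X) (x a b c : X) : Prop :=
  a ∈ D ∧ b ∈ D ∧ c ∈ D ∧ a ≠ x ∧ b ≠ x ∧ c ≠ x ∧
    connectedComponentIn ({x}ᶜ) a ≠ connectedComponentIn ({x}ᶜ) b ∧
    connectedComponentIn ({x}ᶜ) a ≠ connectedComponentIn ({x}ᶜ) c ∧
    connectedComponentIn ({x}ᶜ) b ≠ connectedComponentIn ({x}ᶜ) c

private lemma comp_disj {X : Type*} [TopologicalSpace X] {F : Set X} {a b z : X}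
    (h : connectedComponentIn F a ≠ connectedComponentIn F b)
    (hza : z ∈ connectedComponentIn F a) (hzb : z ∈ connectedComponentIn F b) : False := by
  have h1 := connectedComponentIn_eq hza
  have h2 := connectedComponentIn_eq hzb
  exact h (h1.trans h2.symm)

private lemma triple_inj {X : Type*} [TopologicalSpace X] [T1Space X] [ConnectedSpace X]
    [LocallyConnectedSpace X] {D : Set X} {x y a b c : X}
    (hx : TripleProp D x a b c) (hy : TripleProp D y a b c) : x = y := by
  by_contra hxy
  obtain ⟨-, -, -, hax, hbx, hcx, hab, hac, hbc⟩ := hx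
  obtain ⟨-, -, -, hay, hby, hcy, hab', hac', hbc'⟩ := hy
  -- find e among a,b,c with y ∉ Cx e and x ∉ Cy e
  have key : ∃ e : X, e ≠ x ∧ e ≠ y ∧ y ∉ connectedComponentIn ({x}ᶜ) e ∧
      x ∉ connectedComponentIn ({y}ᶜ) e := by
    have h1 : ¬(y ∈ connectedComponentIn ({x}ᶜ) a ∧ y ∈ connectedComponentIn ({x}ᶜ) b) :=
      fun ⟨u, v⟩ => comp_disj hab u v
    have h2 : ¬(y ∈ connectedComponentIn ({x}ᶜ) a ∧ y ∈ connectedComponentIn ({x}ᶜ) c) :=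
      fun ⟨u, v⟩ => comp_disj hac u v
    have h3 : ¬(y ∈ connectedComponentIn ({x}ᶜ) b ∧ y ∈ connectedComponentIn ({x}ᶜ) c) :=
      fun ⟨u, v⟩ => comp_disj hbc u v
    have h4 : ¬(x ∈ connectedComponentIn ({y}ᶜ) a ∧ x ∈ connectedComponentIn ({y}ᶜ) b) :=
      fun ⟨u, v⟩ => comp_disj hab' u v
    have h5 : ¬(x ∈ connectedComponentIn ({y}ᶜ) a ∧ x ∈ connectedComponentIn ({y}ᶜ) c) :=
      fun ⟨u, v⟩ => comp_disj hac' u v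
    have h6 : ¬(x ∈ connectedComponentIn ({y}ᶜ) b ∧ x ∈ connectedComponentIn ({y}ᶜ) c) :=
      fun ⟨u, v⟩ => comp_disj hbc' u v
    have hkey : (y ∉ connectedComponentIn ({x}ᶜ) a ∧ x ∉ connectedComponentIn ({y}ᶜ) a) ∨
        (y ∉ connectedComponentIn ({x}ᶜ) b ∧ x ∉ connectedComponentIn ({y}ᶜ) b) ∨
        (y ∉ connectedComponentIn ({x}ᶜ) c ∧ x ∉ connectedComponentIn ({y}ᶜ) c) := by
      by_cases p1 : y ∈ connectedComponentIn ({x}ᶜ) a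
      · have np2 : y ∉ connectedComponentIn ({x}ᶜ) b := fun v => h1 ⟨p1, v⟩
        have np3 : y ∉ connectedComponentIn ({x}ᶜ) c := fun v => h2 ⟨p1, v⟩
        by_cases q2 : x ∈ connectedComponentIn ({y}ᶜ) b
        · exact Or.inr (Or.inr ⟨np3, fun v => h6 ⟨q2, v⟩⟩)
        · exact Or.inr (Or.inl ⟨np2, q2⟩)
      · by_cases q1 : x ∈ connectedComponentIn ({y}ᶜ) a
        · have nq2 : x ∉ connectedComponentIn ({y}ᶜ) b := fun v => h4 ⟨q1, v⟩
          have nq3 : x ∉ connectedComponentIn ({y}ᶜ) c := fun v => h5 ⟨q1, v⟩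
          by_cases p2 : y ∈ connectedComponentIn ({x}ᶜ) b
          · exact Or.inr (Or.inr ⟨fun v => h3 ⟨p2, v⟩, nq3⟩)
          · exact Or.inr (Or.inl ⟨p2, nq2⟩)
        · exact Or.inl ⟨p1, q1⟩
    rcases hkey with ⟨u, v⟩ | ⟨u, v⟩ | ⟨u, v⟩
    · exact ⟨a, hax, hay, u, v⟩
    · exact ⟨b, hbx, hby, u, v⟩
    · exact ⟨c, hcx, hcy, u, v⟩
  obtain ⟨e, hex, hey, hyC, hxC⟩ := key
  have hexm : e ∈ ({x}ᶜ : Set X) := hex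
  have heym : e ∈ ({y}ᶜ : Set X) := hey
  have hmemx : e ∈ connectedComponentIn ({x}ᶜ) e := mem_connectedComponentIn hexm
  have hmemy : e ∈ connectedComponentIn ({y}ᶜ) e := mem_connectedComponentIn heym
  have hsub1 : connectedComponentIn ({x}ᶜ) e ⊆ connectedComponentIn ({y}ᶜ) e := by
    apply IsPreconnected.subset_connectedComponentIn isPreconnected_connectedComponentIn hmemx
    exact Set.subset_compl_singleton_iff.mpr hyC
  have hsub2 : connectedComponentIn ({y}ᶜ) e ⊆ connectedComponentIn ({x}ᶜ) e := by
    apply IsPreconnected.subset_connectedComponentIn isPreconnected_connectedComponentIn hmemy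
    exact Set.subset_compl_singleton_iff.mpr hxC
  have heq : connectedComponentIn ({x}ᶜ) e = connectedComponentIn ({y}ᶜ) e :=
    hsub1.antisymm hsub2
  have hopen : IsOpen (connectedComponentIn ({x}ᶜ) e) :=
    IsOpen.connectedComponentIn isOpen_compl_singleton
  have hclosed : IsClosed (connectedComponentIn ({x}ᶜ) e) := by
    rw [← closure_subset_iff_isClosed]
    intro z hz
    by_cases hzx : z = x
    · -- use the y-version
      have hzy : z ∈ ({y}ᶜ : Set X) := by simp [hzx, hxy]
      have hzo : IsOpen (connectedComponentIn ({y}ᶜ) z) :=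
        IsOpen.connectedComponentIn isOpen_compl_singleton
      have hzm : z ∈ connectedComponentIn ({y}ᶜ) z := mem_connectedComponentIn hzy
      obtain ⟨w, hw1, hw2⟩ := (mem_closure_iff.mp hz) _ hzo hzm
      rw [heq] at hw2 ⊢
      have e1 := connectedComponentIn_eq (F := ({y}ᶜ)) (x := z) hw1
      have e2 := connectedComponentIn_eq (F := ({y}ᶜ)) (x := e) hw2
      rw [e2, ← e1]
      exact hzm
    · have hzxm : z ∈ ({x}ᶜ : Set X) := hzx
      have hzo : IsOpen (connectedComponentIn ({x}ᶜ) z) :=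
        IsOpen.connectedComponentIn isOpen_compl_singleton
      have hzm : z ∈ connectedComponentIn ({x}ᶜ) z := mem_connectedComponentIn hzxm
      obtain ⟨w, hw1, hw2⟩ := (mem_closure_iff.mp hz) _ hzo hzm
      have e1 := connectedComponentIn_eq (F := ({x}ᶜ)) (x := z) hw1
      have e2 := connectedComponentIn_eq (F := ({x}ᶜ)) (x := e) hw2
      rw [e2, ← e1]
      exact hzm
  rcases isClopen_iff.mp ⟨hclosed, hopen⟩ with h | h
  · rw [h] at hmemx; exact hmemx
  · have : x ∈ connectedComponentIn ({x}ᶜ) e := h ▸ Set.mem_univ x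
    exact (connectedComponentIn_subset ({x}ᶜ) e this) rfl

theorem stmt13 {X : Type*} [MetricSpace X] [CompactSpace X] [ConnectedSpace X]
    [LocallyConnectedSpace X] [Nonempty X]
    (hnocircle : ¬ ∃ s : Set X, Nonempty (s ≃ₜ Circle)) :
    Set.Countable
      {x : X | (3 : Cardinal) ≤ Cardinal.mk (ConnectedComponents (({x}ᶜ : Set X)))} := by
  obtain ⟨D, hDc, hDd⟩ := TopologicalSpace.exists_countable_dense X
  set S := {x : X | (3 : Cardinal) ≤ Cardinal.mk (ConnectedComponents (({x}ᶜ : Set X)))}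
  -- extraction: every x ∈ S has a triple
  have hext : ∀ x ∈ S, ∃ a b c : X, TripleProp D x a b c := by
    intro x hx
    have h3 : (3 : Cardinal) ≤ Cardinal.mk (ConnectedComponents (({x}ᶜ : Set X))) := hx
    have hne : Nonempty (ConnectedComponents (({x}ᶜ : Set X))) := by
      refine Cardinal.mk_ne_zero_iff.mp ?_
      exact fun h0 => by simp [h0] at h3
    obtain ⟨u⟩ := hne
    obtain ⟨v, hvu, -⟩ := Cardinal.three_le h3 u u
    obtain ⟨w, hwu, hwv⟩ := Cardinal.three_le h3 u v
    obtain ⟨p, rfl⟩ := ConnectedComponents.surjective_coe u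
    obtain ⟨q, rfl⟩ := ConnectedComponents.surjective_coe v
    obtain ⟨r, rfl⟩ := ConnectedComponents.surjective_coe w
    rw [ne_eq, ConnectedComponents.coe_eq_coe] at hvu hwu hwv
    -- translate to connectedComponentIn
    have himg : ∀ s t : ({x}ᶜ : Set X),
        connectedComponent s ≠ connectedComponent t →
        connectedComponentIn ({x}ᶜ) ↑s ≠ connectedComponentIn ({x}ᶜ) ↑t := by
      intro s t hst
      rw [connectedComponentIn_eq_image s.2, connectedComponentIn_eq_image t.2]
      intro h
      exact hst (Set.image_injective.mpr Subtype.val_injective (by simpa using h))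
    have hpq := himg q p hvu
    have hrp := himg r p hwu
    have hrq := himg r q hwv
    -- pick dense points in each component
    have pick : ∀ s : ({x}ᶜ : Set X), ∃ d ∈ D,
        connectedComponentIn ({x}ᶜ) d = connectedComponentIn ({x}ᶜ) ↑s ∧ d ≠ x := by
      intro s
      have hopen : IsOpen (connectedComponentIn ({x}ᶜ) ↑s) :=
        IsOpen.connectedComponentIn isOpen_compl_singleton
      have hne : (connectedComponentIn ({x}ᶜ) (↑s : X)).Nonempty :=
        ⟨↑s, mem_connectedComponentIn s.2⟩
      obtain ⟨d, hdD, hdC⟩ := hDd.exists_mem_open hopen hne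
      exact ⟨d, hdD, (connectedComponentIn_eq hdC).symm,
        fun h => (connectedComponentIn_subset ({x}ᶜ) ↑s hdC) (by simp [h])⟩
    obtain ⟨a, haD, haC, hax⟩ := pick p
    obtain ⟨b, hbD, hbC, hbx⟩ := pick q
    obtain ⟨c, hcD, hcC, hcx⟩ := pick r
    exact ⟨a, b, c, haD, hbD, hcD, hax, hbx, hcx,
      by rw [haC, hbC]; exact fun h => hpq h.symm,
      by rw [haC, hcC]; exact fun h => hrp h.symm,
      by rw [hbC, hcC]; exact fun h => hrq h.symm⟩
  -- build injective map into D × D × D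
  choose! fa fb fc hf using hext
  have hDcount : Countable ↥D := hDc.to_subtype
  have : Countable ↥S := by
    refine (Set.countable_coe_iff).mpr ?_
    have hinj : Set.InjOn (fun x => (fa x, fb x, fc x)) S := by
      intro x hxS y hyS hxy
      simp only [Prod.mk.injEq] at hxy
      obtain ⟨h1, h2, h3⟩ := hxy
      exact triple_inj (hf x hxS) (h1 ▸ h2 ▸ h3 ▸ hf y hyS)
    have hmaps : ∀ x ∈ S, (fa x, fb x, fc x) ∈ D ×ˢ D ×ˢ D := by
      intro x hxS
      obtain ⟨hA, hB, hC, -⟩ := hf x hxS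
      exact ⟨hA, hB, hC⟩
    have := Set.Countable.mono (Set.image_subset_iff.mpr hmaps)
      ((hDc.prod (hDc.prod hDc)))
    exact (Set.countable_of_injective_of_countable_image hinj (this)).to_subtype
  exact Set.countable_coe_iff.mp this
end
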